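/- Let (G, Δ, R) be a strict quasitriangular 2-bialgebra with 2-R-matrix components Rˡ ∈ G₋₁⊗G₀, Rʳ ∈ G₀⊗G₋₁ satisfying the equivariance condition (t⊗id)Rˡ = (id⊗t)Rʳ =: R ∈ G₀⊗G₀. Then R satisfies the ordinary quasitriangular coproduct identities for the degree-0 bialgebra (G₀, Δ₀'): (Δ₀' ⊗ id)(R) = R₁₃·R₂₃ and (id ⊗ Δ₀')(R) = R₁₃·R₁₂ in G₀⊗G₀⊗G₀. -/

import Mathlib

/-!
Apply `t ⊗ id ⊗ t` to `(Δ₀ˡ ⊗ id)Rʳ = Rˡ₁₃ ▷ Rʳ₂₃` and `t ⊗ t ⊗ id` to `(id ⊗ Δ₀ˡ)Rˡ = Rˡ₁₃ ◁ Rʳ₁₂`.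
Since `t(x ▷ y) = x t(y)` and `t(y ◁ x) = t(y) x`, `t` turns the factorwise actions into products
in `G₀ ⊗ G₀ ⊗ G₀`, and by equivariance every leg of `Rˡ` or `Rʳ` then becomes the corresponding
leg of `R = (t ⊗ id)Rˡ = (id ⊗ t)Rʳ`.
-/

open scoped TensorProduct

structure AssocTwoAlgebra (k : Type*) [CommRing k] (G₀ G₁ : Type*)
    [NonUnitalRing G₀] [NonUnitalRing G₁] [Module k G₀] [Module k G₁] where
  t : G₁ →ₗ[k] G₀
  t_mul : ∀ y y' : G₁, t (y * y') = t y * t y'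
  actL : G₀ →ₗ[k] G₁ →ₗ[k] G₁
  actR : G₁ →ₗ[k] G₀ →ₗ[k] G₁
  actL_mul : ∀ (x x' : G₀) (y : G₁), actL (x * x') y = actL x (actL x' y)
  actLR : ∀ (x : G₀) (y : G₁) (x' : G₀), actR (actL x y) x' = actL x (actR y x')
  actR_mul : ∀ (y : G₁) (x x' : G₀), actR y (x * x') = actR (actR y x) x'
  equivL : ∀ (x : G₀) (y : G₁), t (actL x y) = x * t y
  equivR : ∀ (y : G₁) (x : G₀), t (actR y x) = t y * x
  peifferL : ∀ y y' : G₁, actL (t y) y' = y * y'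
  peifferR : ∀ y y' : G₁, actR y (t y') = y * y'

noncomputable section

variable (k : Type*) [CommRing k]

section Legs

variable (G₀ G₁ : Type*) [Ring G₀] [Algebra k G₀]
  [NonUnitalRing G₁] [Module k G₁]

/-- place an element of `G₁ ⊗ G₀` in legs 1,3 (unit of `G₀` in leg 2). -/
def legL13 : G₁ ⊗[k] G₀ →ₗ[k] G₁ ⊗[k] (G₀ ⊗[k] G₀) :=
  TensorProduct.map LinearMap.id (TensorProduct.mk k G₀ G₀ 1)

/-- place an element of `G₁ ⊗ G₀` in legs 1,2 (unit of `G₀` in leg 3). -/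
def legL12 : G₁ ⊗[k] G₀ →ₗ[k] G₁ ⊗[k] (G₀ ⊗[k] G₀) :=
  TensorProduct.map LinearMap.id ((TensorProduct.mk k G₀ G₀).flip 1)

/-- place an element of `G₁ ⊗ G₀` in legs 2,3 (unit of `G₀` in leg 1). -/
def legL23 : G₁ ⊗[k] G₀ →ₗ[k] G₀ ⊗[k] (G₁ ⊗[k] G₀) :=
  TensorProduct.mk k G₀ (G₁ ⊗[k] G₀) 1

/-- place an element of `G₀ ⊗ G₁` in legs 1,3 (unit of `G₀` in leg 2). -/
def legR13 : G₀ ⊗[k] G₁ →ₗ[k] G₀ ⊗[k] (G₀ ⊗[k] G₁) :=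
  TensorProduct.map LinearMap.id (TensorProduct.mk k G₀ G₁ 1)

/-- place an element of `G₀ ⊗ G₁` in legs 1,2 (unit of `G₀` in leg 3). -/
def legR12 : G₀ ⊗[k] G₁ →ₗ[k] G₀ ⊗[k] (G₁ ⊗[k] G₀) :=
  TensorProduct.map LinearMap.id ((TensorProduct.mk k G₁ G₀).flip 1)

/-- place an element of `G₀ ⊗ G₁` in legs 2,3 (unit of `G₀` in leg 1). -/
def legR23 : G₀ ⊗[k] G₁ →ₗ[k] G₀ ⊗[k] (G₀ ⊗[k] G₁) :=
  TensorProduct.mk k G₀ (G₀ ⊗[k] G₁) 1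

/-- leg placements of an element of `G₀ ⊗ G₀` inside `G₀ ⊗ (G₀ ⊗ G₀)`. -/
def leg012 : G₀ ⊗[k] G₀ →ₗ[k] G₀ ⊗[k] (G₀ ⊗[k] G₀) :=
  TensorProduct.map LinearMap.id ((TensorProduct.mk k G₀ G₀).flip 1)

def leg013 : G₀ ⊗[k] G₀ →ₗ[k] G₀ ⊗[k] (G₀ ⊗[k] G₀) :=
  TensorProduct.map LinearMap.id (TensorProduct.mk k G₀ G₀ 1)

def leg023 : G₀ ⊗[k] G₀ →ₗ[k] G₀ ⊗[k] (G₀ ⊗[k] G₀) :=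
  TensorProduct.mk k G₀ (G₀ ⊗[k] G₀) 1

end Legs

namespace TensorProduct

variable {k} {M N P M' N' P' A B : Type*}
  [AddCommMonoid M] [AddCommMonoid N] [AddCommMonoid P] [Module k M] [Module k N] [Module k P]
  [AddCommMonoid M'] [AddCommMonoid N'] [AddCommMonoid P'] [Module k M'] [Module k N']
  [Module k P'] [Semiring A] [Algebra k A] [Semiring B] [Algebra k B]

theorem map_map₂_eq_mul {f : M →ₗ[k] N →ₗ[k] P} {f' : M' →ₗ[k] N' →ₗ[k] P'}
    {φ : P →ₗ[k] A} {ψ : M →ₗ[k] A} {χ : N →ₗ[k] A}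
    {φ' : P' →ₗ[k] B} {ψ' : M' →ₗ[k] B} {χ' : N' →ₗ[k] B}
    (h : ∀ m n, φ (f m n) = ψ m * χ n) (h' : ∀ m n, φ' (f' m n) = ψ' m * χ' n)
    (x : M ⊗[k] M') (y : N ⊗[k] N') :
    map φ φ' (map₂ f f' x y) = map ψ ψ' x * map χ χ' y := by
  induction x using TensorProduct.induction_on with
  | zero => simp
  | add x₁ x₂ ih₁ ih₂ => simp only [map_add, LinearMap.add_apply, add_mul, ih₁, ih₂]
  | tmul m m' =>
    induction y using TensorProduct.induction_on with
    | zero => simp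
    | add y₁ y₂ ih₁ ih₂ => simp only [map_add, mul_add, ih₁, ih₂]
    | tmul n n' => simp [h, h', Algebra.TensorProduct.tmul_mul_tmul]

end TensorProduct

open TensorProduct

section LegNaturality

variable {k} {G₀ G₁ : Type*} [Ring G₀] [Algebra k G₀]
  [NonUnitalRing G₁] [Module k G₁] (φ : G₁ →ₗ[k] G₀)

theorem map_legL13 (x : G₁ ⊗[k] G₀) :
    map φ LinearMap.id (legL13 k G₀ G₁ x) = leg013 k G₀ (map φ LinearMap.id x) := by
  induction x using TensorProduct.induction_on with
  | zero => simp
  | tmul y p => simp [legL13, leg013]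
  | add x₁ x₂ ih₁ ih₂ => simp only [map_add, ih₁, ih₂]

theorem map_legR23 (x : G₀ ⊗[k] G₁) :
    map LinearMap.id (map LinearMap.id φ) (legR23 k G₀ G₁ x)
      = leg023 k G₀ (map LinearMap.id φ x) := by
  simp [legR23, leg023]

theorem map_legR12 (x : G₀ ⊗[k] G₁) :
    map LinearMap.id (map φ LinearMap.id) (legR12 k G₀ G₁ x)
      = leg012 k G₀ (map LinearMap.id φ x) := by
  induction x using TensorProduct.induction_on with
  | zero => simp
  | tmul p y => simp [legR12, leg012]
  | add x₁ x₂ ih₁ ih₂ => simp only [map_add, ih₁, ih₂]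

end LegNaturality

section Coproduct

variable {k} {M N : Type*} [AddCommMonoid M] [Module k M]
  [AddCommMonoid N] [Module k N] (φ : N →ₗ[k] M) (Δ : M →ₗ[k] N ⊗[k] M)

theorem assoc_map_comp_map_id (x : M ⊗[k] N) :
    TensorProduct.assoc k M M M (map (map φ LinearMap.id ∘ₗ Δ) LinearMap.id (map LinearMap.id φ x))
      = map φ (map LinearMap.id φ) (TensorProduct.assoc k N M N (map Δ LinearMap.id x)) := by
  induction x using TensorProduct.induction_on with
  | zero => simp
  | tmul p y => simp [map_map_assoc]
  | add x₁ x₂ ih₁ ih₂ => simp only [map_add, ih₁, ih₂]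

theorem map_id_comp_map (x : N ⊗[k] M) :
    map LinearMap.id (map φ LinearMap.id ∘ₗ Δ) (map φ LinearMap.id x)
      = map φ (map φ LinearMap.id) (map LinearMap.id Δ x) := by
  rw [← LinearMap.comp_apply, ← LinearMap.comp_apply, ← map_comp, ← map_comp]
  simp

end Coproduct

namespace AssocTwoAlgebra

variable {k} {G₀ G₁ : Type*} [Ring G₀] [Algebra k G₀]
  [NonUnitalRing G₁] [Module k G₁] (A : AssocTwoAlgebra k G₀ G₁)

theorem map_t_actR_mul_actL (a : G₁ ⊗[k] (G₀ ⊗[k] G₀)) (b : G₀ ⊗[k] (G₀ ⊗[k] G₁)) :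
    map A.t (map LinearMap.id A.t) (map₂ A.actR (map₂ (LinearMap.mul k G₀) A.actL) a b)
      = map A.t LinearMap.id a * map LinearMap.id (map LinearMap.id A.t) b := by
  have inner := map_map₂_eq_mul (φ := LinearMap.id) (ψ := LinearMap.id) (χ := LinearMap.id)
    (f := LinearMap.mul k G₀) (ψ' := LinearMap.id) (χ' := A.t) (fun _ _ => rfl) A.equivL
  rw [map_map₂_eq_mul (χ := LinearMap.id) A.equivR inner, map_id]

theorem map_t_actR_actL_mul (a : G₁ ⊗[k] (G₀ ⊗[k] G₀)) (b : G₀ ⊗[k] (G₁ ⊗[k] G₀)) :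
    map A.t (map A.t LinearMap.id) (map₂ A.actR (map₂ A.actL (LinearMap.mul k G₀)) a b)
      = map A.t LinearMap.id a * map LinearMap.id (map A.t LinearMap.id) b := by
  have inner := map_map₂_eq_mul (φ' := LinearMap.id) (ψ' := LinearMap.id) (χ' := LinearMap.id)
    (f' := LinearMap.mul k G₀) (ψ := LinearMap.id) (χ := A.t) A.equivL (fun _ _ => rfl)
  rw [map_map₂_eq_mul (χ := LinearMap.id) A.equivR inner, map_id]

end AssocTwoAlgebra

theorem deg0_quasitriangular {G₀ G₁ : Type*} [Ring G₀] [Algebra k G₀]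
    [NonUnitalRing G₁] [Module k G₁]
    (A : AssocTwoAlgebra k G₀ G₁)
    (Δl : G₀ →ₗ[k] G₁ ⊗[k] G₀)
    (Rl : G₁ ⊗[k] G₀) (Rr : G₀ ⊗[k] G₁)
    -- equivariance: (t⊗id)Rˡ = (id⊗t)Rʳ
    (hequiv : TensorProduct.map A.t LinearMap.id Rl
              = TensorProduct.map LinearMap.id A.t Rr)
    -- compatibility with the coproduct:
    -- (Δ₀ˡ⊗id)Rʳ = Rˡ₁₃ ▷ Rʳ₂₃
    (h1 : (TensorProduct.assoc k G₁ G₀ G₁)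
            (TensorProduct.map Δl LinearMap.id Rr)
          = TensorProduct.map₂ A.actR
              (TensorProduct.map₂ (LinearMap.mul k G₀) A.actL)
              (legL13 k G₀ G₁ Rl) (legR23 k G₀ G₁ Rr))
    -- (id⊗Δ₀ˡ)Rˡ = Rˡ₁₃ ◁ Rʳ₁₂
    (h3 : TensorProduct.map LinearMap.id Δl Rl
          = TensorProduct.map₂ A.actR
              (TensorProduct.map₂ A.actL (LinearMap.mul k G₀))
              (legL13 k G₀ G₁ Rl) (legR12 k G₀ G₁ Rr)) :
    -- conclusion: with R = (t⊗id)Rˡ and Δ₀' = (t⊗id)∘Δ₀ˡ,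
    -- (Δ₀'⊗id)(R) = R₁₃·R₂₃ and (id⊗Δ₀')(R) = R₁₃·R₁₂
    (TensorProduct.assoc k G₀ G₀ G₀)
        (TensorProduct.map (TensorProduct.map A.t LinearMap.id ∘ₗ Δl) LinearMap.id
          (TensorProduct.map A.t LinearMap.id Rl))
      = leg013 k G₀ (TensorProduct.map A.t LinearMap.id Rl)
        * leg023 k G₀ (TensorProduct.map A.t LinearMap.id Rl) ∧
    TensorProduct.map LinearMap.id (TensorProduct.map A.t LinearMap.id ∘ₗ Δl)
        (TensorProduct.map A.t LinearMap.id Rl)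
      = leg013 k G₀ (TensorProduct.map A.t LinearMap.id Rl)
        * leg012 k G₀ (TensorProduct.map A.t LinearMap.id Rl) := by
  constructor
  · have h := congrArg (map A.t (map LinearMap.id A.t)) h1
    rw [A.map_t_actR_mul_actL, map_legL13, map_legR23] at h
    rw [hequiv, assoc_map_comp_map_id, h, ← hequiv]
  · have h := congrArg (map A.t (map A.t LinearMap.id)) h3
    rw [A.map_t_actR_actL_mul, map_legL13, map_legR12] at h
    rw [map_id_comp_map, h, ← hequiv]

end
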